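/- Define the binary matrix M_q(i; d, k, n) with rows indexed by d-dimensional subspaces A of F_q^n and columns indexed by k-dimensional subspaces B, where M(A,B)=1 iff dim(A∩B)=i. Suppose ⌊(d+1)/2⌋ ≤ i ≤ d < k, k − i ≥ 2, n − k − s(k+d−2i) ≥ d − i, and 1 ≤ s ≤ q(q^{k-1}−1)/(q^{k-i}−1). Then for any s+1 distinct k-dimensional subspaces B₀, B₁, ..., B_s of F_q^n, the number of d-dimensional subspaces D with dim(D ∩ B₀) = i and dim(D ∩ B_j) ≠ i for all j = 1,...,s is at least q^{(d-i)(k+s(k+d−2i)−i)}·[n−k−s(k+d−2i) choose d−i]_q · (q^{k-i}[k-1 choose i-1]_q − (s−1)q^{k-i-1}[k-2 choose i-1]_q). -/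

import Mathlib

open Module

/-- The Gaussian binomial coefficient `[a choose b]_q` as a rational number. -/
noncomputable def gbin (q : ℚ) (a b : ℕ) : ℚ :=
  if a < b then 0
  else (∏ t ∈ Finset.Icc (a - b + 1) a, (q ^ t - 1)) / ∏ t ∈ Finset.Icc 1 b, (q ^ t - 1)

/-!
For an `i`-subspace `I ≤ B₀` lying in no other `B j`, enlarge `B₀` to a space `W` of dimension
`K = k + s (k + d - 2i)` that meets every `B j` in at least `k - i + 1` more dimensions than `I`
does. Every `d`-space `D ⊇ I` with `D ∩ W = I` then meets `B₀` exactly in `I`, and, since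
`dim (D ∩ B j) + dim (W ∩ B j) ≤ k + dim (I ∩ B j)`, meets each `B j` in fewer than `i`
dimensions. Such `D` correspond to the `(d - i)`-subspaces of `V / I` avoiding `W / I`, of which
there are `q^((d-i)(K-i)) [n-K, d-i]_q`, and distinct `I` give distinct `D`.

It remains to count the admissible `I`. Choose `j₁` maximising `dim (B₀ ∩ B j)`. Among the
`[k, i]_q` subspaces `I ≤ B₀`, at most `[k-1, i]_q` lie in `B j₁`, and for every other `j` at most
`[k-1, i]_q - [k-2, i]_q` lie in `B j` but not in `B j₁`: either `dim (B₀ ∩ B j) ≤ k - 2`, or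
`B₀ ∩ B j` and `B₀ ∩ B j₁` are hyperplanes of `B₀` sharing a `(k-2)`-space. Pascal's rule turns
the resulting bound into the last factor.
-/

section GaussianBinomial

open Finset

variable {q : ℚ}

lemma prod_Icc_pow_sub_one_pos (hq : 1 < q) {a b : ℕ} (ha : 1 ≤ a) :
    0 < ∏ t ∈ Icc a b, (q ^ t - 1) :=
  prod_pos fun t ht => sub_pos.2 (one_lt_pow₀ hq (by grind))

lemma prod_pow_sub_pow_pos (hq : 1 < q) {c m : ℕ} (hmc : m ≤ c) :
    0 < ∏ t : Fin m, (q ^ c - q ^ (t : ℕ)) :=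
  prod_pos fun t _ => sub_pos.2 (pow_lt_pow_right₀ hq (by omega))

lemma prod_pow_sub_pow_eq {c m : ℕ} (hmc : m ≤ c) :
    ∏ t : Fin m, (q ^ c - q ^ (t : ℕ))
      = (∏ t ∈ range m, q ^ t) * ∏ t ∈ Icc (c - m + 1) c, (q ^ t - 1) := by
  rw [Fin.prod_univ_eq_prod_range (fun t => q ^ c - q ^ t)]
  induction m with
  | zero => simp
  | succ m ih =>
    have hIcc : Icc (c - (m + 1) + 1) c = insert (c - m) (Icc (c - m + 1) c) := by
      ext x; simp only [mem_Icc, mem_insert]; omega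
    have hfactor : q ^ c - q ^ m = q ^ m * (q ^ (c - m) - 1) := by
      rw [mul_sub, mul_one, ← pow_add, Nat.add_sub_cancel' (by omega)]
    rw [prod_range_succ, ih (by omega), hIcc, prod_insert (by simp), prod_range_succ, hfactor]
    ring

lemma gbin_mul_prod (hq : 1 < q) {c m : ℕ} (hmc : m ≤ c) :
    gbin q c m * ∏ t : Fin m, (q ^ m - q ^ (t : ℕ)) = ∏ t : Fin m, (q ^ c - q ^ (t : ℕ)) := by
  have hden := (prod_Icc_pow_sub_one_pos hq (le_refl 1) (b := m)).ne'
  rw [gbin, if_neg (by omega), prod_pow_sub_pow_eq hmc, prod_pow_sub_pow_eq le_rfl,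
    Nat.sub_self, zero_add]
  field_simp

lemma gbin_zero_right (q : ℚ) (a : ℕ) : gbin q a 0 = 1 := by
  simp [gbin]

lemma gbin_of_lt {a b : ℕ} (h : a < b) : gbin q a b = 0 :=
  if_pos h

lemma gbin_nonneg (hq : 1 < q) (a b : ℕ) : 0 ≤ gbin q a b := by
  unfold gbin
  split_ifs
  · exact le_rfl
  · exact div_nonneg (prod_Icc_pow_sub_one_pos hq (by omega)).le
      (prod_Icc_pow_sub_one_pos hq le_rfl).le

lemma gbin_succ_succ (hq : 1 < q) {a b : ℕ} (hba : b < a) :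
    gbin q (a + 1) (b + 1) = gbin q a (b + 1) + q ^ (a - b) * gbin q a b := by
  have hIcc₁ : Icc (a + 1 - (b + 1) + 1) (a + 1) = insert (a + 1) (Icc (a - b + 1) a) := by
    ext x; simp only [mem_Icc, mem_insert]; omega
  have hIcc₂ : Icc (a - (b + 1) + 1) a = insert (a - b) (Icc (a - b + 1) a) := by
    ext x; simp only [mem_Icc, mem_insert]; omega
  have hIcc₃ : Icc 1 (b + 1) = insert (b + 1) (Icc 1 b) := by
    ext x; simp only [mem_Icc, mem_insert]; omega
  rw [gbin, gbin, gbin, if_neg (by omega), if_neg (by omega), if_neg (by omega),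
    hIcc₁, hIcc₂, hIcc₃, prod_insert (by simp), prod_insert (by simp), prod_insert (by simp)]
  have hden := (prod_Icc_pow_sub_one_pos hq (le_refl 1) (b := b)).ne'
  have hb : q ^ (b + 1) - 1 ≠ 0 := (sub_pos.2 (one_lt_pow₀ hq (by omega))).ne'
  have hpow : q ^ (a - b) * q ^ (b + 1) = q ^ (a + 1) := by
    rw [← pow_add]; congr 1; omega
  field_simp
  linear_combination (-∏ t ∈ Icc (a - b + 1) a, (q ^ t - 1)) * hpow

lemma gbin_mono_left (hq : 1 < q) (b : ℕ) : Monotone fun a => gbin q a b := by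
  refine monotone_nat_of_le_succ fun a => ?_
  rcases b with _ | b
  · simp [gbin_zero_right]
  rcases lt_or_ge a (b + 1) with h | h
  · rw [gbin_of_lt h]
    exact gbin_nonneg hq _ _
  · rw [gbin_succ_succ hq h]
    exact le_add_of_nonneg_right
      (mul_nonneg (pow_nonneg (by linarith) _) (gbin_nonneg hq _ _))

lemma two_mul_gbin_le_gbin_succ (hq : 2 ≤ q) {a b : ℕ} (hb : 1 ≤ b) (hba : b ≤ a) :
    2 * gbin q a b ≤ gbin q (a + 1) b := by
  have hq1 : 1 < q := by linarith
  have hprod : 2 * ∏ t : Fin b, (q ^ a - q ^ (t : ℕ)) ≤ ∏ t : Fin b, (q ^ (a + 1) - q ^ (t : ℕ)) :=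
    calc 2 * ∏ t : Fin b, (q ^ a - q ^ (t : ℕ))
        ≤ q ^ b * ∏ t : Fin b, (q ^ a - q ^ (t : ℕ)) := by
          gcongr
          · exact (prod_pow_sub_pow_pos hq1 hba).le
          · exact le_trans hq (le_self_pow₀ (by linarith) (by omega))
      _ = ∏ t : Fin b, q * (q ^ a - q ^ (t : ℕ)) := by
          rw [prod_mul_distrib, prod_const, card_univ, Fintype.card_fin]
      _ ≤ ∏ t : Fin b, (q ^ (a + 1) - q ^ (t : ℕ)) := by
          refine prod_le_prod (fun t _ => ?_) (fun t _ => ?_)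
          · exact mul_nonneg (by linarith) (sub_pos.2 (pow_lt_pow_right₀ hq1 (by omega))).le
          · have : q ^ (t : ℕ) ≤ q * q ^ (t : ℕ) := le_mul_of_one_le_left (by positivity) hq1.le
            rw [pow_succ']
            linarith
  have hpos := prod_pow_sub_pow_pos hq1 (le_refl b)
  rw [← gbin_mul_prod hq1 hba, ← gbin_mul_prod hq1 (by omega : b ≤ a + 1)] at hprod
  nlinarith

lemma gbin_sub_gbin_pred (hq : 1 < q) {a b : ℕ} (hb : 1 ≤ b) (hba : b < a) :
    gbin q a b - gbin q (a - 1) b = q ^ (a - b) * gbin q (a - 1) (b - 1) := by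
  obtain ⟨a, rfl⟩ : ∃ a', a = a' + 1 := ⟨a - 1, by omega⟩
  obtain ⟨b, rfl⟩ : ∃ b', b = b' + 1 := ⟨b - 1, by omega⟩
  rw [gbin_succ_succ hq (by omega)]
  simp

lemma mul_pow_pred_sub_one_div_lt_one (hq : 1 < q) {k : ℕ} (hk : 1 ≤ k) :
    q * (q ^ (k - 1) - 1) / (q ^ k - 1) < 1 := by
  rw [div_lt_one (sub_pos.2 (one_lt_pow₀ hq (by omega))), mul_sub, mul_one, ← pow_succ',
    Nat.sub_add_cancel hk]
  linarith

end GaussianBinomial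

open Submodule

lemma linearIndependent_mkQ_comp_iff {R M ι : Type*} [Ring R] [AddCommGroup M] [Module R M]
    (W : Submodule R M) (s : ι → M) :
    LinearIndependent R (W.mkQ ∘ s)
      ↔ LinearIndependent R s ∧ Disjoint (span R (Set.range s)) W := by
  refine ⟨fun h => ⟨h.of_comp, by simpa using range_ker_disjoint h⟩, fun ⟨hs, hW⟩ => ?_⟩
  exact (W.mkQ.linearIndependent_iff_of_disjoint (by rwa [ker_mkQ])).2 hs

instance Submodule.finite_of_finite {R M : Type*} [Semiring R] [AddCommMonoid M] [Module R M]
    [Finite M] : Finite (Submodule R M) :=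
  Finite.of_injective _ SetLike.coe_injective

section Quotient

variable {F V : Type*} [Field F] [AddCommGroup V] [Module F V]

lemma finrank_map_mkQ_add_finrank [FiniteDimensional F V] {I D : Submodule F V} (hID : I ≤ D) :
    finrank F (D.map I.mkQ) + finrank F I = finrank F D := by
  have h := LinearMap.finrank_range_add_finrank_ker (I.mkQ ∘ₗ D.subtype)
  rwa [LinearMap.range_comp, range_subtype, LinearMap.ker_comp, ker_mkQ,
    (comapSubtypeEquivOfLe hID).finrank_eq] at h

lemma disjoint_map_mkQ_iff {I D W : Submodule F V} (hID : I ≤ D) (hIW : I ≤ W) :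
    Disjoint (D.map I.mkQ) (W.map I.mkQ) ↔ D ⊓ W = I := by
  rw [disjoint_iff, ← (comap_injective_of_surjective (mkQ_surjective I)).eq_iff, comap_inf,
    comap_map_mkQ, comap_map_mkQ, comap_bot, ker_mkQ, sup_eq_right.2 hID, sup_eq_right.2 hIW]

noncomputable def extensionsEquiv [FiniteDimensional F V] {I W : Submodule F V} (hIW : I ≤ W)
    (m : ℕ) :
    {D : Submodule F V // finrank F D = finrank F I + m ∧ I ≤ D ∧ D ⊓ W = I}
      ≃ {D' : Submodule F (V ⧸ I) // finrank F D' = m ∧ Disjoint D' (W.map I.mkQ)} where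
  toFun D := ⟨D.1.map I.mkQ, by
    have := finrank_map_mkQ_add_finrank D.2.2.1
    exact ⟨by omega, (disjoint_map_mkQ_iff D.2.2.1 hIW).2 D.2.2.2⟩⟩
  invFun D' := ⟨D'.1.comap I.mkQ, by
    have hmap : (D'.1.comap I.mkQ).map I.mkQ = D'.1 :=
      map_comap_eq_of_surjective (mkQ_surjective I) _
    have hID : I ≤ D'.1.comap I.mkQ := le_comap_mkQ I _
    have := finrank_map_mkQ_add_finrank hID
    rw [hmap] at this
    refine ⟨by omega, hID, (disjoint_map_mkQ_iff hID hIW).1 ?_⟩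
    rw [hmap]
    exact D'.2.2⟩
  left_inv D := Subtype.ext <| by simp [comap_map_mkQ, sup_eq_right.2 D.2.2.1]
  right_inv D' := Subtype.ext <| map_comap_eq_of_surjective (mkQ_surjective I) _

end Quotient

lemma cast_prod_pow_sub_pow {q c m : ℕ} (hq : 1 ≤ q) (hmc : m ≤ c) :
    ((∏ t : Fin m, (q ^ c - q ^ (t : ℕ)) : ℕ) : ℚ) = ∏ t : Fin m, ((q : ℚ) ^ c - q ^ (t : ℕ)) := by
  rw [Nat.cast_prod]
  refine Finset.prod_congr rfl fun t _ => ?_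
  rw [Nat.cast_sub (Nat.pow_le_pow_right hq (by omega)), Nat.cast_pow, Nat.cast_pow]

lemma eq_mul_gbin_of_mul_prod_eq {q N A c m : ℕ} (hq : 2 ≤ q) (hmc : m ≤ c)
    (h : N * ∏ t : Fin m, (q ^ m - q ^ (t : ℕ)) = A * ∏ t : Fin m, (q ^ c - q ^ (t : ℕ))) :
    (N : ℚ) = A * gbin q c m := by
  have hq' : (1 : ℚ) < q := by exact_mod_cast hq
  have hcast := congrArg (Nat.cast : ℕ → ℚ) h
  push_cast only [Nat.cast_mul] at hcast
  rw [cast_prod_pow_sub_pow (by omega) le_rfl, cast_prod_pow_sub_pow (by omega) hmc,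
    ← gbin_mul_prod hq' hmc] at hcast
  exact mul_right_cancel₀ (prod_pow_sub_pow_pos hq' le_rfl).ne' (by linarith)

section SubspaceCounting

variable {F V : Type*} [Field F] [Fintype F] [AddCommGroup V] [Module F V] [Finite V]

def tuplesInEquiv {i : ℕ} (U : Submodule F V) :
    {s : Fin i → V // LinearIndependent F s ∧ span F (Set.range s) ≤ U}
      ≃ {s : Fin i → U // LinearIndependent F s} where
  toFun s := ⟨fun t => ⟨s.1 t, s.2.2 (subset_span (Set.mem_range_self t))⟩,
    LinearIndependent.of_comp U.subtype s.2.1⟩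
  invFun s := ⟨fun t => s.1 t, s.2.map' U.subtype (ker_subtype U), by
    rw [span_le]
    rintro _ ⟨t, rfl⟩
    exact (s.1 t).2⟩
  left_inv _ := rfl
  right_inv _ := rfl

lemma card_linearIndependent_span_le {i : ℕ} (U : Submodule F V) (hi : i ≤ finrank F U) :
    Nat.card {s : Fin i → V // LinearIndependent F s ∧ span F (Set.range s) ≤ U}
      = ∏ t : Fin i, (Fintype.card F ^ finrank F U - Fintype.card F ^ (t : ℕ)) := by
  rw [Nat.card_congr (tuplesInEquiv U), card_linearIndependent hi]

lemma card_linearIndependent_span_eq {i : ℕ} (I : Submodule F V) (hI : finrank F I = i) :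
    Nat.card {s : Fin i → V // LinearIndependent F s ∧ span F (Set.range s) = I}
      = ∏ t : Fin i, (Fintype.card F ^ i - Fintype.card F ^ (t : ℕ)) := by
  rw [← hI, ← card_linearIndependent_span_le I le_rfl]
  refine Nat.card_congr (Equiv.subtypeEquivRight fun s => and_congr_right fun hs => ?_)
  refine ⟨le_of_eq, fun h => eq_of_le_of_finrank_eq h ?_⟩
  rw [finrank_span_eq_card hs, Fintype.card_fin]

/-- Independent `i`-tuples fibre over their spans, each fibre being the set of bases of an
`i`-dimensional space. -/
lemma card_linearIndependent_span_prop (i : ℕ) (P : Submodule F V → Prop) :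
    Nat.card {s : Fin i → V // LinearIndependent F s ∧ P (span F (Set.range s))}
      = Nat.card {I : Submodule F V // finrank F I = i ∧ P I}
          * ∏ t : Fin i, (Fintype.card F ^ i - Fintype.card F ^ (t : ℕ)) := by
  classical
  have : Fintype {I : Submodule F V // finrank F I = i ∧ P I} := Fintype.ofFinite _
  let e : {s : Fin i → V // LinearIndependent F s ∧ P (span F (Set.range s))}
      ≃ Σ I : {I : Submodule F V // finrank F I = i ∧ P I},
          {s : Fin i → V // LinearIndependent F s ∧ span F (Set.range s) = I.1} :=
    { toFun s := ⟨⟨span F (Set.range s.1), by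
          rw [finrank_span_eq_card s.2.1, Fintype.card_fin], s.2.2⟩, ⟨s.1, s.2.1, rfl⟩⟩
      invFun p := ⟨p.2.1, p.2.2.1, by rw [p.2.2.2]; exact p.1.2.2⟩
      left_inv _ := rfl
      right_inv p := Sigma.subtype_ext (Subtype.ext p.2.2.2) rfl }
  rw [Nat.card_congr e, Nat.card_sigma,
    Finset.sum_congr rfl fun I _ => card_linearIndependent_span_eq I.1 I.2.1, Finset.sum_const, Finset.card_univ, smul_eq_mul, Nat.card_eq_fintype_card]

lemma card_submodule_finrank_le_mul (i : ℕ) (U : Submodule F V) (hi : i ≤ finrank F U) :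
    Nat.card {I : Submodule F V // finrank F I = i ∧ I ≤ U}
        * ∏ t : Fin i, (Fintype.card F ^ i - Fintype.card F ^ (t : ℕ))
      = ∏ t : Fin i, (Fintype.card F ^ finrank F U - Fintype.card F ^ (t : ℕ)) := by
  rw [← card_linearIndependent_span_prop i (· ≤ U), card_linearIndependent_span_le U hi]

/-- Lifting through a section of `W.mkQ` splits a tuple into its image in `V ⧸ W` and a
`W`-valued correction. -/
noncomputable def tuplesDisjointEquiv (m : ℕ) (W : Submodule F V) :
    {s : Fin m → V // LinearIndependent F s ∧ Disjoint (span F (Set.range s)) W}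
      ≃ {u : Fin m → V ⧸ W // LinearIndependent F u} × (Fin m → W) :=
  let σ := (W.mkQ.exists_rightInverse_of_surjective (range_mkQ W)).choose
  have hσ (x : V ⧸ W) : Submodule.Quotient.mk (p := W) (σ x) = x :=
    LinearMap.congr_fun (W.mkQ.exists_rightInverse_of_surjective (range_mkQ W)).choose_spec x
  have hW (w : W) : Submodule.Quotient.mk (p := W) (w : V) = 0 := (Quotient.mk_eq_zero W).2 w.2
  { toFun s := (⟨W.mkQ ∘ s.1, (linearIndependent_mkQ_comp_iff W s.1).2 s.2⟩,
      fun t => ⟨s.1 t - σ (W.mkQ (s.1 t)), by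
        rw [← Quotient.mk_eq_zero W, Quotient.mk_sub, hσ, mkQ_apply, sub_self]⟩)
    invFun p := ⟨fun t => σ (p.1.1 t) + p.2 t, by
      have hcomp : W.mkQ ∘ (fun t => σ (p.1.1 t) + p.2 t) = p.1.1 := by
        funext t
        simp [hσ, hW]
      rw [← linearIndependent_mkQ_comp_iff, hcomp]
      exact p.1.2⟩
    left_inv s := by ext t; simp
    right_inv p := by
      ext t
      · simp [hσ, hW]
      · simp [hσ, hW] }

lemma card_submodule_disjoint_mul (m : ℕ) (W : Submodule F V)
    (hm : m ≤ finrank F V - finrank F W) :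
    Nat.card {D : Submodule F V // finrank F D = m ∧ Disjoint D W}
        * ∏ t : Fin m, (Fintype.card F ^ m - Fintype.card F ^ (t : ℕ))
      = Fintype.card F ^ (finrank F W * m)
          * ∏ t : Fin m, (Fintype.card F ^ (finrank F V - finrank F W)
              - Fintype.card F ^ (t : ℕ)) := by
  have : Finite (V ⧸ W) := Module.finite_of_finite F
  have hquot : finrank F (V ⧸ W) = finrank F V - finrank F W := finrank_quotient W
  rw [← card_linearIndependent_span_prop m (Disjoint · W), Nat.card_congr (tuplesDisjointEquiv m W),
    Nat.card_prod, card_linearIndependent (hquot ▸ hm), hquot, Nat.card_fun,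
    Module.natCard_eq_pow_finrank (K := F), Nat.card_eq_fintype_card, Nat.card_fin, ← pow_mul,
    mul_comm]

lemma card_extensions_mul {I W : Submodule F V} (hIW : I ≤ W) (m : ℕ)
    (hm : m ≤ finrank F V - finrank F W) :
    Nat.card {D : Submodule F V // finrank F D = finrank F I + m ∧ I ≤ D ∧ D ⊓ W = I}
        * ∏ t : Fin m, (Fintype.card F ^ m - Fintype.card F ^ (t : ℕ))
      = Fintype.card F ^ ((finrank F W - finrank F I) * m)
          * ∏ t : Fin m, (Fintype.card F ^ (finrank F V - finrank F W)
              - Fintype.card F ^ (t : ℕ)) := by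
  have : Finite (V ⧸ I) := Module.finite_of_finite F
  have hW := finrank_map_mkQ_add_finrank hIW
  have hV : finrank F (V ⧸ I) + finrank F I = finrank F V := finrank_quotient_add_finrank I
  have hWV : finrank F W ≤ finrank F V := finrank_le W
  have hsub : finrank F (V ⧸ I) - finrank F (W.map I.mkQ) = finrank F V - finrank F W := by omega
  rw [Nat.card_congr (extensionsEquiv hIW m), card_submodule_disjoint_mul m _ (by omega), hsub,
    show finrank F (W.map I.mkQ) = finrank F W - finrank F I by omega]

lemma card_submodule_finrank_le (i : ℕ) (U : Submodule F V) :
    (Nat.card {I : Submodule F V // finrank F I = i ∧ I ≤ U} : ℚ)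
      = gbin (Fintype.card F) (finrank F U) i := by
  rcases lt_or_ge (finrank F U) i with hUi | hiU
  · have : IsEmpty {I : Submodule F V // finrank F I = i ∧ I ≤ U} :=
      ⟨fun I => (finrank_mono I.2.2).not_gt (by rw [I.2.1]; exact hUi)⟩
    rw [Nat.card_of_isEmpty, gbin_of_lt hUi, Nat.cast_zero]
  · simpa using eq_mul_gbin_of_mul_prod_eq (A := 1) Fintype.one_lt_card hiU
      (by rw [one_mul]; exact card_submodule_finrank_le_mul i U hiU)

lemma card_extensions {I W : Submodule F V} (hIW : I ≤ W) {m : ℕ}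
    (hm : m ≤ finrank F V - finrank F W) :
    (Nat.card {D : Submodule F V // finrank F D = finrank F I + m ∧ I ≤ D ∧ D ⊓ W = I} : ℚ)
      = (Fintype.card F : ℚ) ^ ((finrank F W - finrank F I) * m)
          * gbin (Fintype.card F) (finrank F V - finrank F W) m := by
  exact_mod_cast eq_mul_gbin_of_mul_prod_eq Fintype.one_lt_card hm (card_extensions_mul hIW m hm)

end SubspaceCounting

section Envelope

variable {F V : Type*} [Field F] [AddCommGroup V] [Module F V] [FiniteDimensional F V]

lemma exists_finrank_eq_of_le {p P : Submodule F V} (hpP : p ≤ P) {r : ℕ}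
    (hpr : finrank F p ≤ r) (hrP : r ≤ finrank F P) :
    ∃ W : Submodule F V, p ≤ W ∧ W ≤ P ∧ finrank F W = r := by
  obtain ⟨c, rfl⟩ : ∃ c, r = finrank F p + c := ⟨r - finrank F p, by omega⟩
  induction c generalizing p with
  | zero => exact ⟨p, le_rfl, hpP, rfl⟩
  | succ c ih =>
    obtain ⟨x, hxP, hxp⟩ := SetLike.exists_of_lt (lt_of_le_of_ne hpP (by rintro rfl; omega))
    have hx := finrank_sup_span_singleton hxp
    obtain ⟨W, hW, hWP, hWr⟩ :=
      ih (sup_le hpP ((span_singleton_le_iff_mem x P).2 hxP)) (by omega) (by omega)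
    exact ⟨W, le_sup_left.trans hW, hWP, by omega⟩

lemma finrank_sup_finset_sup_le {ι : Type*} [DecidableEq ι] (P₀ : Submodule F V)
    (U : ι → Submodule F V) {c : ℕ} (t : Finset ι)
    (hU : ∀ j ∈ t, finrank F (U j) ≤ finrank F ↥(P₀ ⊓ U j) + c) :
    finrank F ↥(P₀ ⊔ t.sup U) ≤ finrank F P₀ + t.card * c := by
  induction t using Finset.induction_on with
  | empty => rw [Finset.sup_empty, sup_bot_eq, Finset.card_empty, zero_mul, add_zero]
  | insert a t ha ih =>
    rw [Finset.sup_insert, sup_comm (U a), ← sup_assoc, Finset.card_insert_of_notMem ha]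
    have hsup := finrank_sup_add_finrank_inf_eq (P₀ ⊔ t.sup U) (U a)
    have hinf : finrank F ↥(P₀ ⊓ U a) ≤ finrank F ↥((P₀ ⊔ t.sup U) ⊓ U a) :=
      finrank_mono (inf_le_inf_right _ le_sup_left)
    have := hU a (Finset.mem_insert_self a t)
    have := ih fun j hj => hU j (Finset.mem_insert_of_mem hj)
    nlinarith

lemma exists_envelope {ι : Type*} [Fintype ι] {I B₀ : Submodule F V} (B : ι → Submodule F V)
    {c K : ℕ} (hIB₀ : I ≤ B₀) (hc : ∀ j, finrank F ↥(I ⊓ B j) + c ≤ finrank F (B j))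
    (hK : finrank F B₀ + Fintype.card ι * c ≤ K) (hKV : K ≤ finrank F V) :
    ∃ W : Submodule F V, B₀ ≤ W ∧ finrank F W = K ∧
      ∀ j, finrank F ↥(I ⊓ B j) + c ≤ finrank F ↥(W ⊓ B j) := by
  classical
  choose U hIU hUB hU using fun j =>
    exists_finrank_eq_of_le (inf_le_right : I ⊓ B j ≤ B j) (Nat.le_add_right _ c) (hc j)
  have hX := finrank_sup_finset_sup_le B₀ U Finset.univ fun j _ => by
    rw [hU j]
    exact Nat.add_le_add_right (finrank_mono (le_inf (inf_le_left.trans hIB₀) (hIU j))) c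
  rw [Finset.card_univ] at hX
  obtain ⟨W, hXW, -, hW⟩ := exists_finrank_eq_of_le (le_top : B₀ ⊔ Finset.univ.sup U ≤ ⊤) (r := K)
    (by omega) (by rwa [finrank_top])
  refine ⟨W, le_sup_left.trans hXW, hW, fun j => ?_⟩
  rw [← hU j]
  exact finrank_mono (le_inf ((Finset.le_sup (Finset.mem_univ j)).trans le_sup_right |>.trans hXW)
    (hUB j))

lemma finrank_inf_add_finrank_inf_le {I D W : Submodule F V} (hDW : D ⊓ W = I)
    (B : Submodule F V) :
    finrank F ↥(D ⊓ B) + finrank F ↥(W ⊓ B) ≤ finrank F B + finrank F ↥(I ⊓ B) := by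
  have h := finrank_sup_add_finrank_inf_eq (D ⊓ B) (W ⊓ B)
  rw [inf_inf_inf_comm, hDW, inf_idem] at h
  have := finrank_mono (sup_le inf_le_right inf_le_right : D ⊓ B ⊔ W ⊓ B ≤ B)
  omega

lemma finrank_inf_lt_of_ne {B₀ B : Submodule F V} (hB : finrank F B = finrank F B₀)
    (hne : B ≠ B₀) : finrank F ↥(B₀ ⊓ B) < finrank F B₀ :=
  finrank_lt_finrank_of_lt (inf_lt_left.2 fun h => hne (eq_of_le_of_finrank_eq h hB.symm).symm)

end Envelope

section Avoiding

variable {F V : Type*} [Field F] [AddCommGroup V] [Module F V] [Finite V] {ι : Type*}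

noncomputable def subspacesIn (i : ℕ) (U : Submodule F V) : Finset (Submodule F V) :=
  (Set.toFinite {I : Submodule F V | finrank F I = i ∧ I ≤ U}).toFinset

noncomputable def subspacesAvoiding (i : ℕ) (B₀ : Submodule F V) (B : ι → Submodule F V) :
    Finset (Submodule F V) :=
  (Set.toFinite {I : Submodule F V | finrank F I = i ∧ I ≤ B₀ ∧ ∀ j, ¬I ≤ B j}).toFinset

@[simp]
lemma mem_subspacesIn {i : ℕ} {U I : Submodule F V} :
    I ∈ subspacesIn i U ↔ finrank F I = i ∧ I ≤ U := by
  simp [subspacesIn]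

@[simp]
lemma mem_subspacesAvoiding {i : ℕ} {B₀ I : Submodule F V} {B : ι → Submodule F V} :
    I ∈ subspacesAvoiding i B₀ B ↔ finrank F I = i ∧ I ≤ B₀ ∧ ∀ j, ¬I ≤ B j := by
  simp [subspacesAvoiding]

variable [Fintype ι]

lemma exists_envelope_of_mem_subspacesAvoiding {i d k K : ℕ} {I B₀ : Submodule F V}
    {B : ι → Submodule F V} (hI : I ∈ subspacesAvoiding i B₀ B) (hB₀ : finrank F B₀ = k)
    (hB : ∀ j, finrank F (B j) = k) (hid : i ≤ d)
    (hK : k + Fintype.card ι * (k + d - 2 * i) ≤ K) (hKV : K ≤ finrank F V) :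
    ∃ W : Submodule F V, B₀ ≤ W ∧ finrank F W = K ∧
      ∀ D : Submodule F V, finrank F D = d → I ≤ D → D ⊓ W = I →
        ∀ j, finrank F ↥(D ⊓ B j) < i := by
  obtain ⟨hIi, hIB₀, hIB⟩ := mem_subspacesAvoiding.1 hI
  have hik : i ≤ k := hIi ▸ hB₀ ▸ finrank_mono hIB₀
  have hIB_lt (j : ι) : finrank F ↥(I ⊓ B j) < i :=
    hIi ▸ finrank_lt_finrank_of_lt (inf_lt_left.2 (hIB j))
  rcases hid.eq_or_lt with rfl | hid
  · obtain ⟨W, hB₀W, -, hW⟩ := exists_finrank_eq_of_le (le_top : B₀ ≤ ⊤) (r := K)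
      (by rw [hB₀]; omega) (by rwa [finrank_top])
    refine ⟨W, hB₀W, hW, fun D hD hID _ j => ?_⟩
    rw [← eq_of_le_of_finrank_eq hID (hIi.trans hD.symm)]
    exact hIB_lt j
  · have hc : Fintype.card ι * (k - i + 1) ≤ Fintype.card ι * (k + d - 2 * i) :=
      Nat.mul_le_mul_left _ (by omega)
    obtain ⟨W, hB₀W, hW, hWB⟩ := exists_envelope B (c := k - i + 1) hIB₀
      (fun j => by have := hIB_lt j; rw [hB j]; omega) (by omega) hKV
    refine ⟨W, hB₀W, hW, fun D _ _ hDW j => ?_⟩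
    have := finrank_inf_add_finrank_inf_le hDW (B j)
    have := hWB j
    have := hIB_lt j
    rw [hB j] at *
    omega

variable [Fintype F]

lemma card_subspacesIn (i : ℕ) (U : Submodule F V) :
    ((subspacesIn i U).card : ℚ) = gbin (Fintype.card F) (finrank F U) i := by
  rw [subspacesIn, ← Set.ncard_eq_toFinset_card, ← Nat.card_coe_set_eq]
  exact card_submodule_finrank_le i U

lemma card_subspacesAvoiding_mul_le_card {i d k K : ℕ} {B₀ : Submodule F V} {B : ι → Submodule F V}
    (hB₀ : finrank F B₀ = k) (hB : ∀ j, finrank F (B j) = k) (hid : i ≤ d)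
    (hK : k + Fintype.card ι * (k + d - 2 * i) ≤ K) (hKV : K ≤ finrank F V)
    (hdK : d - i ≤ finrank F V - K) :
    ((subspacesAvoiding i B₀ B).card : ℚ)
        * ((Fintype.card F : ℚ) ^ ((d - i) * (K - i))
          * gbin (Fintype.card F) (finrank F V - K) (d - i))
      ≤ Nat.card {D : Submodule F V // finrank F D = d ∧ finrank F ↥(D ⊓ B₀) = i ∧
          ∀ j, finrank F ↥(D ⊓ B j) ≠ i} := by
  choose! W hB₀W hW hWD using fun I (hI : I ∈ subspacesAvoiding i B₀ B) =>
    exists_envelope_of_mem_subspacesAvoiding hI hB₀ hB hid hK hKV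
  let E (I : subspacesAvoiding i B₀ B) := {D : Submodule F V //
    finrank F D = finrank F I.1 + (d - i) ∧ I.1 ≤ D ∧ D ⊓ W I = I}
  have hD₀ (I : subspacesAvoiding i B₀ B) (D : E I) : D.1 ⊓ B₀ = I :=
    le_antisymm ((inf_le_inf_left _ (hB₀W I I.2)).trans D.2.2.2.le)
      (le_inf D.2.2.1 (mem_subspacesAvoiding.1 I.2).2.1)
  let f (p : Σ I, E I) : {D : Submodule F V // finrank F D = d ∧ finrank F ↥(D ⊓ B₀) = i ∧
      ∀ j, finrank F ↥(D ⊓ B j) ≠ i} := ⟨p.2.1, by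
    obtain ⟨I, D, hD, hID, hDW⟩ := p
    obtain ⟨hIi, -, -⟩ := mem_subspacesAvoiding.1 I.2
    dsimp only
    refine ⟨by omega, by rw [hD₀ I ⟨D, hD, hID, hDW⟩, hIi], fun j => ?_⟩
    exact (hWD I I.2 D (by omega) hID hDW j).ne⟩
  have hf : Function.Injective f := by
    rintro ⟨I, D⟩ ⟨I', D'⟩ h
    have hDD' : D.1 = D'.1 := congrArg Subtype.val h
    have hII' : I = I' := Subtype.ext ((hD₀ I D).symm.trans (hDD' ▸ hD₀ I' D'))
    subst hII'
    exact Sigma.subtype_ext rfl hDD'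
  have hE (I : subspacesAvoiding i B₀ B) : (Nat.card (E I) : ℚ)
      = (Fintype.card F : ℚ) ^ ((d - i) * (K - i))
          * gbin (Fintype.card F) (finrank F V - K) (d - i) := by
    obtain ⟨hIi, hIB₀, -⟩ := mem_subspacesAvoiding.1 I.2
    rw [card_extensions (hIB₀.trans (hB₀W I I.2)) (by rw [hW I I.2]; exact hdK), hW I I.2, hIi,
      mul_comm (K - i)]
  calc _ = ∑ I : subspacesAvoiding i B₀ B, (Nat.card (E I) : ℚ) := by
        simp [hE]
    _ = Nat.card (Σ I, E I) := by rw [Nat.card_sigma]; push_cast; rfl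
    _ ≤ _ := by exact_mod_cast Nat.card_le_card_of_injective f hf

lemma card_subspacesIn_sdiff_le [DecidableEq (Submodule F V)] {i k : ℕ} (hi : 1 ≤ i)
    (hik : i + 2 ≤ k) {B₀ X Y : Submodule F V} (hB₀ : finrank F B₀ = k) (hX : X ≤ B₀)
    (hY : Y ≤ B₀) (hYX : finrank F Y ≤ finrank F X) (hXk : finrank F X < k) :
    ((subspacesIn i Y \ subspacesIn i X).card : ℚ)
      ≤ gbin (Fintype.card F) (k - 1) i - gbin (Fintype.card F) (k - 2) i := by
  have hq : (2 : ℚ) ≤ Fintype.card F := by exact_mod_cast Fintype.one_lt_card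
  have hmono := gbin_mono_left (q := Fintype.card F) (by linarith) i
  have hsd : subspacesIn i Y \ subspacesIn i X = subspacesIn i Y \ subspacesIn i (X ⊓ Y) := by
    ext I
    simp only [Finset.mem_sdiff, mem_subspacesIn, le_inf_iff]
    tauto
  have hsub : subspacesIn i (X ⊓ Y) ⊆ subspacesIn i Y := fun I hI => by
    rw [mem_subspacesIn] at hI ⊢
    exact ⟨hI.1, hI.2.trans inf_le_right⟩
  rw [hsd, Finset.card_sdiff_of_subset hsub, Nat.cast_sub (Finset.card_le_card hsub),
    card_subspacesIn, card_subspacesIn]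
  have hXY := finrank_sup_add_finrank_inf_eq X Y
  have := hB₀ ▸ finrank_mono (sup_le hX hY)
  rcases (finrank F Y).lt_or_ge (k - 1) with hYk | hYk
  · have h₁ := hmono (show finrank F Y ≤ k - 2 by omega)
    have h₂ := two_mul_gbin_le_gbin_succ hq (a := k - 2) hi (by omega)
    rw [show k - 2 + 1 = k - 1 by omega] at h₂
    have h₃ := gbin_nonneg (q := Fintype.card F) (by linarith) (finrank F ↥(X ⊓ Y)) i
    dsimp only at h₁
    linarith
  · have h₁ := hmono (show k - 2 ≤ finrank F ↥(X ⊓ Y) by omega)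
    rw [show finrank F Y = k - 1 by omega]
    dsimp only at h₁
    linarith

lemma card_subspacesAvoiding_ge {ι : Type*} [Fintype ι] [Nonempty ι] {i k : ℕ}
    {B₀ : Submodule F V} {B : ι → Submodule F V} (hB₀ : finrank F B₀ = k)
    (hB : ∀ j, finrank F (B j) = k) (hBne : ∀ j, B j ≠ B₀) (hi : 1 ≤ i) (hik : i + 2 ≤ k) :
    gbin (Fintype.card F) k i - gbin (Fintype.card F) (k - 1) i
        - (Fintype.card ι - 1 : ℚ)
          * (gbin (Fintype.card F) (k - 1) i - gbin (Fintype.card F) (k - 2) i)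
      ≤ (subspacesAvoiding i B₀ B).card := by
  classical
  have hq : (1 : ℚ) < Fintype.card F := by exact_mod_cast Fintype.one_lt_card
  obtain ⟨j₁, -, hj₁⟩ := Finset.exists_max_image Finset.univ (fun j => finrank F ↥(B₀ ⊓ B j))
    Finset.univ_nonempty
  have hlt (j : ι) : finrank F ↥(B₀ ⊓ B j) < k :=
    hB₀ ▸ finrank_inf_lt_of_ne ((hB j).trans hB₀.symm) (hBne j)
  let A (j : ι) := subspacesIn i (B₀ ⊓ B j)
  have hcover : subspacesIn i B₀ ⊆ subspacesAvoiding i B₀ B ∪ A j₁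
      ∪ (Finset.univ.erase j₁).biUnion fun j => A j \ A j₁ := by
    intro I hI
    rw [mem_subspacesIn] at hI
    by_cases hgood : ∀ j, ¬I ≤ B j
    · simp [hI, hgood]
    · obtain ⟨j, hj⟩ := not_forall_not.1 hgood
      by_cases hj₁ : I ≤ B j₁
      · simp [A, hI, hj₁]
      · simp only [A, Finset.mem_union, Finset.mem_biUnion, Finset.mem_erase, Finset.mem_sdiff,
          mem_subspacesAvoiding, mem_subspacesIn, le_inf_iff]
        exact Or.inr ⟨j, ⟨by rintro rfl; exact hj₁ hj, Finset.mem_univ j⟩,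
          ⟨hI.1, hI.2, hj⟩, fun h => hj₁ h.2.2⟩
  have hcard := (Finset.card_le_card hcover).trans ((Finset.card_union_le _ _).trans
    (add_le_add (Finset.card_union_le _ _) Finset.card_biUnion_le))
  have hsum := Finset.sum_le_card_nsmul (Finset.univ.erase j₁) (fun j => ((A j \ A j₁).card : ℚ))
    _ fun j _ => card_subspacesIn_sdiff_le hi hik hB₀ inf_le_left inf_le_left
      (hj₁ j (Finset.mem_univ j)) (hlt j₁)
  rw [Finset.card_erase_of_mem (Finset.mem_univ _), Finset.card_univ, nsmul_eq_mul,
    Nat.cast_sub Fintype.card_pos, Nat.cast_one] at hsum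
  have hA₁ : ((A j₁).card : ℚ) ≤ gbin (Fintype.card F) (k - 1) i := by
    rw [card_subspacesIn]
    exact gbin_mono_left hq i (by have := hlt j₁; omega)
  have hall := card_subspacesIn (F := F) i B₀
  rw [hB₀] at hall
  have hcast : ((subspacesIn i B₀).card : ℚ) ≤ (subspacesAvoiding i B₀ B).card + (A j₁).card
      + ∑ j ∈ Finset.univ.erase j₁, ((A j \ A j₁).card : ℚ) := by
    exact_mod_cast hcard
  linarith

end Avoiding

theorem stmt_11_general (q n k d i s : ℕ)
    (hid : i ≤ d) (hki : 2 ≤ k - i)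
    (hn : d - i ≤ n - k - s * (k + d - 2 * i)) (hkn : k + s * (k + d - 2 * i) ≤ n)
    (hs1 : 1 ≤ s) (hs2 : (s : ℚ) ≤ (q : ℚ) * ((q : ℚ) ^ (k - 1) - 1) / ((q : ℚ) ^ (k - i) - 1))
    (F : Type*) [Field F] [Fintype F] (hF : Fintype.card F = q)
    (V : Type*) [AddCommGroup V] [Module F V] [FiniteDimensional F V]
    (hV : finrank F V = n)
    (B : Fin (s + 1) → Submodule F V) (hBinj : Function.Injective B)
    (hBk : ∀ j, finrank F (B j) = k) :
    (Nat.card {D : Submodule F V // finrank F D = d ∧ finrank F ↥(D ⊓ B 0) = i ∧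
        ∀ j : Fin (s + 1), j ≠ 0 → finrank F ↥(D ⊓ B j) ≠ i} : ℚ)
      ≥ (q : ℚ) ^ ((d - i) * (k + s * (k + d - 2 * i) - i))
          * gbin q (n - k - s * (k + d - 2 * i)) (d - i)
          * ((q : ℚ) ^ (k - i) * gbin q (k - 1) (i - 1)
              - (s - 1 : ℚ) * (q : ℚ) ^ (k - i - 1) * gbin q (k - 2) (i - 1)) := by
  subst hF hV
  have : Finite V := Module.finite_of_finite F
  have : Nonempty (Fin s) := ⟨⟨0, hs1⟩⟩
  have hq : (1 : ℚ) < Fintype.card F := by exact_mod_cast Fintype.one_lt_card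
  have hi : 1 ≤ i := by
    by_contra! hi
    obtain rfl : i = 0 := by omega
    have := mul_pow_pred_sub_one_div_lt_one hq (k := k) (by omega)
    have : (1 : ℚ) ≤ s := by exact_mod_cast hs1
    rw [Nat.sub_zero] at hs2
    linarith
  have hpascal₁ := gbin_sub_gbin_pred hq hi (a := k) (by omega)
  have hpascal₂ := gbin_sub_gbin_pred hq hi (a := k - 1) (by omega)
  rw [show k - 1 - 1 = k - 2 by omega, show k - 1 - i = k - i - 1 by omega] at hpascal₂
  have havoid := card_subspacesAvoiding_ge (B := fun j : Fin s => B j.succ) (hBk 0)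
    (fun j => hBk _) (fun j => hBinj.ne (Fin.succ_ne_zero j)) hi (by omega)
  rw [Fintype.card_fin] at havoid
  have htarget := card_subspacesAvoiding_mul_le_card (B := fun j : Fin s => B j.succ) (hBk 0)
    (fun j => hBk _) hid (K := k + s * (k + d - 2 * i)) (by rw [Fintype.card_fin]) hkn (by omega)
  rw [ge_iff_le, Nat.sub_sub]
  calc _ = (gbin (Fintype.card F) k i - gbin (Fintype.card F) (k - 1) i
        - (s - 1 : ℚ) * (gbin (Fintype.card F) (k - 1) i - gbin (Fintype.card F) (k - 2) i))
        * ((Fintype.card F : ℚ) ^ ((d - i) * (k + s * (k + d - 2 * i) - i))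
          * gbin (Fintype.card F) (finrank F V - (k + s * (k + d - 2 * i))) (d - i)) := by
        rw [hpascal₁, hpascal₂]
        ring
    _ ≤ _ := by
      gcongr
      exact mul_nonneg (pow_nonneg (by linarith) _) (gbin_nonneg hq _ _)
    _ ≤ _ := htarget
    _ = _ := by simp [Fin.forall_fin_succ]

theorem stmt_11 (q n k d i s : ℕ) (p e : ℕ) (hp : p.Prime) (hq : q = p ^ e) (he : 1 ≤ e)
    (hi1 : (d + 1) / 2 ≤ i) (hid : i ≤ d) (hdk : d < k) (hki : 2 ≤ k - i)
    (hn : d - i ≤ n - k - s * (k + d - 2 * i)) (hkn : k + s * (k + d - 2 * i) ≤ n)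
    (hs1 : 1 ≤ s) (hs2 : (s : ℚ) ≤ (q : ℚ) * ((q : ℚ) ^ (k - 1) - 1) / ((q : ℚ) ^ (k - i) - 1))
    (F : Type*) [Field F] [Fintype F] (hF : Fintype.card F = q)
    (V : Type*) [AddCommGroup V] [Module F V] [FiniteDimensional F V]
    (hV : finrank F V = n)
    (B : Fin (s + 1) → Submodule F V) (hBinj : Function.Injective B)
    (hBk : ∀ j, finrank F (B j) = k) :
    (Nat.card {D : Submodule F V // finrank F D = d ∧ finrank F ↥(D ⊓ B 0) = i ∧
        ∀ j : Fin (s + 1), j ≠ 0 → finrank F ↥(D ⊓ B j) ≠ i} : ℚ)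
      ≥ (q : ℚ) ^ ((d - i) * (k + s * (k + d - 2 * i) - i))
          * gbin q (n - k - s * (k + d - 2 * i)) (d - i)
          * ((q : ℚ) ^ (k - i) * gbin q (k - 1) (i - 1)
              - (s - 1 : ℚ) * (q : ℚ) ^ (k - i - 1) * gbin q (k - 2) (i - 1)) :=
  stmt_11_general q n k d i s hid hki hn hkn hs1 hs2 F hF V hV B hBinj hBk
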